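/- Let ξ_o < ξ_i be positive reals, n ≥ 1 an integer, ε_m > 0, ε_s > 0 with ε_s ≠ ε_m, and λ = (ε_m + ε_s)/(2(ε_m − ε_s)). Then (1+2λ) sinh(nξ_o) e^{n(ξ_o+ξ_i)} − cosh(nξ_i)(e^{2nξ_o} − e^{2nξ_i}) = 0 if and only if ε_s = tanh(nξ_i) coth(n(ξ_i − ξ_o)) ε_m. -/

import Mathlib

/-!
Write `a = nξ_o`, `b = nξ_i`. Since `e^{2a} - e^{2b} = -2 e^{a+b} sinh (b - a)` and
`1 + 2λ = 2ε_m / (ε_m - ε_s)`, the left-hand side is `e^{a+b}` times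
`2ε_m / (ε_m - ε_s) · sinh a + 2 cosh b · sinh (b - a)`. Expanding `sinh a = sinh (b - (b - a))`,
this vanishes exactly when `ε_s cosh b sinh (b - a) = ε_m sinh b cosh (b - a)`, and
`cosh b sinh (b - a) > 0` as soon as `a < b`.
-/

noncomputable def coth (x : ℝ) : ℝ := Real.cosh x / Real.sinh x

open Real

theorem Real.exp_two_mul_sub_exp_two_mul (a b : ℝ) :
    exp (2 * a) - exp (2 * b) = -2 * exp (a + b) * sinh (b - a) := by
  have ha : exp (2 * a) = exp (a + b) * exp (-(b - a)) := by rw [← exp_add]; ring_nf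
  have hb : exp (2 * b) = exp (a + b) * exp (b - a) := by rw [← exp_add]; ring_nf
  rw [ha, hb, sinh_eq]
  ring

theorem one_add_two_mul_div_two_mul_sub {x y : ℝ} (h : x ≠ y) :
    1 + 2 * ((x + y) / (2 * (x - y))) = 2 * x / (x - y) := by
  have : x - y ≠ 0 := sub_ne_zero.2 h
  field_simp
  ring

theorem two_mul_div_sub_mul_sinh_add_eq_zero_iff {a b εm εs : ℝ} (hne : εs ≠ εm)
    (hab : sinh (b - a) ≠ 0) :
    2 * εm / (εm - εs) * sinh a + 2 * (cosh b * sinh (b - a)) = 0 ↔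
      εs = tanh b * coth (b - a) * εm := by
  have hd : εm - εs ≠ 0 := sub_ne_zero.2 hne.symm
  have hcosh : cosh b ≠ 0 := (cosh_pos b).ne'
  have hsinh_a : sinh a = sinh b * cosh (b - a) - cosh b * sinh (b - a) := by
    rw [← sinh_sub, sub_sub_cancel]
  rw [tanh_eq_sinh_div_cosh, coth, hsinh_a]
  constructor
  · intro h
    field_simp at h ⊢
    linear_combination -h / 2
  · intro h
    field_simp at h ⊢
    linear_combination -2 * h

theorem stmt3_general (ξo ξi εm εs : ℝ) (n : ℕ) (h2 : ξo < ξi) (hn : 1 ≤ n)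
    (hne : εs ≠ εm)
    (lam : ℝ) (hlam : lam = (εm + εs) / (2 * (εm - εs))) :
    (1 + 2 * lam) * Real.sinh (n * ξo) * Real.exp (n * (ξo + ξi)) -
        Real.cosh (n * ξi) * (Real.exp (2 * n * ξo) - Real.exp (2 * n * ξi)) = 0 ↔
      εs = Real.tanh (n * ξi) * coth (n * (ξi - ξo)) * εm := by
  have hsinh : sinh (n * ξi - n * ξo) ≠ 0 :=
    (sinh_pos_iff.2 (sub_pos.2 (mul_lt_mul_of_pos_left h2 (Nat.cast_pos.2 hn)))).ne'
  have hfactor : (1 + 2 * lam) * sinh (n * ξo) * exp (n * (ξo + ξi)) -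
      cosh (n * ξi) * (exp (2 * n * ξo) - exp (2 * n * ξi)) =
      exp (n * ξo + n * ξi) *
        (2 * εm / (εm - εs) * sinh (n * ξo) + 2 * (cosh (n * ξi) * sinh (n * ξi - n * ξo))) := by
    rw [hlam, one_add_two_mul_div_two_mul_sub hne.symm, mul_assoc 2 (n : ℝ), mul_assoc 2 (n : ℝ),
      exp_two_mul_sub_exp_two_mul, mul_add]
    ring
  rw [hfactor, mul_eq_zero, or_iff_right (exp_pos _).ne', mul_sub,
    two_mul_div_sub_mul_sinh_add_eq_zero_iff hne hsinh]

theorem stmt3 (ξo ξi εm εs : ℝ) (n : ℕ) (h1 : 0 < ξo) (h2 : ξo < ξi) (hn : 1 ≤ n)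
    (hεm : 0 < εm) (hεs : 0 < εs) (hne : εs ≠ εm)
    (lam : ℝ) (hlam : lam = (εm + εs) / (2 * (εm - εs))) :
    (1 + 2 * lam) * Real.sinh (n * ξo) * Real.exp (n * (ξo + ξi)) -
        Real.cosh (n * ξi) * (Real.exp (2 * n * ξo) - Real.exp (2 * n * ξi)) = 0 ↔
      εs = Real.tanh (n * ξi) * coth (n * (ξi - ξo)) * εm :=
  stmt3_general ξo ξi εm εs n h2 hn hne lam hlam
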